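/- arXiv:math/0407076 — 5 statements merged into one kernel-verified Lean document; each statement's English description precedes it below -/
import Mathlib

section
/- Let p be a positive integer and suppose ∫_S |φ|^p dπ < ∞. Then μ(φ) has a finite p-th moment and E[μ(φ)^p] = ∑_{n=1}^{p} ∑_{k_1,…,k_n ≥ 1, k_1+⋯+k_n = p} (p!/(n!·k_1!⋯k_n!)) · ν(φ^{k_1})⋯ν(φ^{k_n}). -/
/-!
Conditioning on the independent index `N = m` gives
`E[μ(φ)^p] = ∑ₘ P(N = m) E[(φ(ξ₀) + ⋯ + φ(ξₘ₋₁))^p]`. By the multinomial theorem and independence,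
the inner expectation is a sum over `k : ℕ^m` with `|k| = p` of `multinomial(k) ∏ π(φ^{kᵢ})`.
Grouping the `k` by their support, of size `n`, turns it into `C(m, n)` times a sum over the
compositions of `p` into `n` positive parts, and `∑ₘ P(N = m) C(m, n) = λⁿ / n!` is the `n`-th
factorial moment of the Poisson law. Running the same computation for `|φ|` gives integrability.
-/

open MeasureTheory ProbabilityTheory Finset
open scoped ENNReal

lemma le_of_mem_piAntidiag {ι : Type*} [DecidableEq ι] {s : Finset ι} {k : ι → ℕ} {p : ℕ}
    (hk : k ∈ s.piAntidiag p) {i : ι} (hi : i ∈ s) : k i ≤ p := by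
  rw [← (mem_piAntidiag.1 hk).1]
  exact single_le_sum (fun _ _ => Nat.zero_le _) hi

section Compositions

variable {R : Type*} [CommSemiring R]

def compositionSum (c : ℕ → R) (n p : ℕ) : R :=
  ∑ t ∈ (Nat.antidiagonalTuple n p).filter (fun t => ∀ i, 1 ≤ t i),
    (Nat.multinomial univ t : R) * ∏ i, c (t i)

lemma compositionSum_eq_zero {c : ℕ → R} {n p : ℕ} (hp : p ≠ 0) (hn : n ∉ Icc 1 p) :
    compositionSum c n p = 0 := by
  refine sum_eq_zero fun t ht => absurd ?_ hn
  obtain ⟨hsum, hpos⟩ := by simpa only [mem_filter, Nat.mem_antidiagonalTuple] using ht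
  have hle : #(univ : Finset (Fin n)) • 1 ≤ ∑ i, t i := card_nsmul_le_sum _ _ _ fun i _ => hpos i
  simp only [card_univ, Fintype.card_fin, smul_eq_mul, mul_one, hsum] at hle
  refine mem_Icc.2 ⟨Nat.one_le_iff_ne_zero.2 ?_, hle⟩
  rintro rfl
  simp [eq_comm, hp] at hsum

lemma prod_equivFin_symm {ι M : Type*} [CommMonoid M] (t : Finset ι) (f : ι → M) :
    ∏ a, f (t.equivFin.symm a) = ∏ i ∈ t, f i :=
  (t.equivFin.symm.prod_comp fun i => f i).trans (t.prod_coe_sort f)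

lemma sum_piAntidiag_pos_eq_compositionSum {ι : Type*} [DecidableEq ι] (t : Finset ι) (c : ℕ → R)
    (p : ℕ) :
    ∑ k ∈ (t.piAntidiag p).filter (fun k => ∀ i ∈ t, k i ≠ 0),
        (Nat.multinomial t k : R) * ∏ i ∈ t, c (k i) = compositionSum c #t p := by
  set e := t.equivFin
  have hsum (k : ι → ℕ) : ∑ a, k (e.symm a) = ∑ i ∈ t, k i :=
    (e.symm.sum_comp fun i => k i).trans (t.sum_coe_sort k)
  refine sum_nbij' (fun k a => k (e.symm a))
    (fun u i => if h : i ∈ t then u (e ⟨i, h⟩) else 0) ?_ ?_ ?_ ?_ ?_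
  · intro k hk
    simp only [mem_filter, mem_piAntidiag, Nat.mem_antidiagonalTuple] at hk ⊢
    exact ⟨(hsum k).trans hk.1.1, fun a => Nat.one_le_iff_ne_zero.2 (hk.2 _ (e.symm a).2)⟩
  · intro u hu
    simp only [mem_filter, mem_piAntidiag, Nat.mem_antidiagonalTuple] at hu ⊢
    refine ⟨⟨?_, fun i hi => ?_⟩, fun i hi => ?_⟩
    · rw [← hsum, ← hu.1]
      exact Fintype.sum_congr _ _ fun a => by simp
    · by_contra h
      exact hi (dif_neg h)
    · rw [dif_pos hi]
      exact Nat.one_le_iff_ne_zero.1 (hu.2 _)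
  · intro k hk
    simp only [mem_filter, mem_piAntidiag] at hk
    funext i
    by_cases hi : i ∈ t
    · simp [hi]
    · simp only [hi, dif_neg, not_false_eq_true]
      by_contra h
      exact hi (hk.1.2 i (Ne.symm h))
  · intro u _
    funext a
    simp
  · intro k _
    rw [← prod_equivFin_symm t (fun i => c (k i))]
    congr 2
    unfold Nat.multinomial
    rw [hsum, prod_equivFin_symm t fun i => (k i).factorial]

lemma filter_piAntidiag_support_eq {ι : Type*} [DecidableEq ι] {s t : Finset ι} (hts : t ⊆ s)
    (p : ℕ) :
    (s.piAntidiag p).filter (fun k => s.filter (k · ≠ 0) = t) =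
      (t.piAntidiag p).filter (fun k => ∀ i ∈ t, k i ≠ 0) := by
  ext k
  simp only [mem_filter, mem_piAntidiag]
  constructor
  · rintro ⟨⟨hsum, hsupp⟩, rfl⟩
    exact ⟨⟨by rwa [sum_filter_ne_zero], fun i hi => mem_filter.2 ⟨hsupp i hi, hi⟩⟩,
      fun i hi => (mem_filter.1 hi).2⟩
  · rintro ⟨⟨hsum, hsupp⟩, hpos⟩
    refine ⟨⟨?_, fun i hi => hts (hsupp i hi)⟩, ?_⟩
    · rwa [← sum_subset hts fun i _ hit => by_contra fun h => hit (hsupp i h)]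
    · ext i
      simp only [mem_filter]
      exact ⟨fun h => hsupp i h.2, fun hi => ⟨hts hi, hpos i hi⟩⟩

lemma sum_piAntidiag_multinomial_mul_prod {ι : Type*} [DecidableEq ι] (s : Finset ι) {c : ℕ → R}
    (hc : c 0 = 1) {p : ℕ} (hp : p ≠ 0) :
    ∑ k ∈ s.piAntidiag p, (Nat.multinomial s k : R) * ∏ i ∈ s, c (k i) =
      ∑ n ∈ Icc 1 p, ((#s).choose n : R) * compositionSum c n p := by
  have hfiber : ∀ t ∈ s.powerset,
      ∑ k ∈ (s.piAntidiag p).filter (fun k => s.filter (k · ≠ 0) = t),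
        (Nat.multinomial s k : R) * ∏ i ∈ s, c (k i) = compositionSum c #t p := by
    intro t ht
    have hts := mem_powerset.1 ht
    rw [← sum_piAntidiag_pos_eq_compositionSum, filter_piAntidiag_support_eq hts]
    refine sum_congr rfl fun k hk => ?_
    simp only [mem_filter, mem_piAntidiag] at hk
    have hzero (i : ι) (hi : i ∉ t) : k i = 0 := by_contra fun h => hi (hk.1.2 i h)
    rw [Nat.multinomial_congr_of_sdiff hts (fun i hi => hzero i (mem_sdiff.1 hi).2) fun _ _ => rfl,
      prod_subset hts fun i _ hit => by rw [hzero i hit, hc]]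
  calc _ = ∑ t ∈ s.powerset, ∑ k ∈ (s.piAntidiag p).filter (fun k => s.filter (k · ≠ 0) = t),
        (Nat.multinomial s k : R) * ∏ i ∈ s, c (k i) :=
        (sum_fiberwise_of_maps_to (fun k _ => mem_powerset.2 (filter_subset _ _)) _).symm
    _ = ∑ t ∈ s.powerset, compositionSum c #t p := sum_congr rfl hfiber
    _ = ∑ n ∈ range (#s + 1), (#s).choose n • compositionSum c n p :=
        sum_powerset_apply_card (compositionSum c · p)
    _ = _ := by
      simp only [nsmul_eq_mul]
      refine sum_congr_of_eq_on_inter (fun n _ hn => ?_) (fun n _ hn => ?_) fun _ _ _ => rfl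
      · rw [compositionSum_eq_zero hp hn, mul_zero]
      · rw [Nat.choose_eq_zero_of_lt (by simpa using hn), Nat.cast_zero, zero_mul]

end Compositions

lemma hasSum_poisson_mul_choose (lam : ℝ) (n : ℕ) :
    HasSum (fun m : ℕ => Real.exp (-lam) * lam ^ m / m.factorial * m.choose n)
      (lam ^ n / n.factorial) := by
  have hlow : ∑ m ∈ range n, Real.exp (-lam) * lam ^ m / m.factorial * m.choose n = 0 :=
    sum_eq_zero fun m hm => by
      rw [Nat.choose_eq_zero_of_lt (mem_range.1 hm), Nat.cast_zero, mul_zero]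
  have hexp : HasSum (fun j : ℕ => lam ^ j / j.factorial) (Real.exp lam) := by
    rw [Real.exp_eq_exp_ℝ]
    exact NormedSpace.expSeries_div_hasSum_exp lam
  have hval : Real.exp (-lam) * lam ^ n / n.factorial * Real.exp lam = lam ^ n / n.factorial := by
    rw [Real.exp_neg]
    field_simp
  have hshift := (hexp.mul_left (Real.exp (-lam) * lam ^ n / n.factorial)).congr_fun
    (g := fun j => Real.exp (-lam) * lam ^ (j + n) / (j + n).factorial * (j + n).choose n)
    fun j => by
      rw [← Nat.choose_symm_add, Nat.cast_add_choose, pow_add]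
      field_simp
  rw [hval, ← sub_zero (lam ^ n / n.factorial), ← hlow] at hshift
  exact (hasSum_nat_add_iff' n).1 hshift

lemma hasSum_poisson_mul_sum_choose (lam : ℝ) (T : Finset ℕ) (a : ℕ → ℝ) :
    HasSum
      (fun m : ℕ => Real.exp (-lam) * lam ^ m / m.factorial * ∑ n ∈ T, (m.choose n : ℝ) * a n)
      (∑ n ∈ T, lam ^ n / n.factorial * a n) := by
  simp only [mul_sum, ← mul_assoc]
  exact hasSum_sum fun n _ => (hasSum_poisson_mul_choose lam n).mul_right (a n)

namespace ProbabilityTheory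

variable {Ω ι : Type*} [MeasurableSpace Ω] {P : Measure Ω} {X : ι → Ω → ℝ}

lemma iIndepFun.integrable_finset_prod [IsProbabilityMeasure P] (hX : iIndepFun X P)
    (hmeas : ∀ i, Measurable (X i)) {s : Finset ι} (hint : ∀ i ∈ s, Integrable (X i) P) :
    Integrable (fun ω => ∏ i ∈ s, X i ω) P := by
  induction s using Finset.cons_induction with
  | empty => simp
  | cons a s ha ih =>
    have hprod : (fun ω => ∏ i ∈ cons a s ha, X i ω) = X a * ∏ i ∈ s, X i := by
      ext ω
      rw [Pi.mul_apply, prod_cons, prod_apply]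
    rw [hprod]
    exact (hX.indepFun_finsetProd_of_notMem hmeas ha).symm.integrable_mul
      (hint a (mem_cons_self a s))
      (by simpa only [prod_fn] using ih fun i hi => hint i (mem_cons_of_mem hi))

lemma iIndepFun.integral_finset_prod (hX : iIndepFun X P) (hmeas : ∀ i, Measurable (X i))
    (s : Finset ι) :
    ∫ ω, ∏ i ∈ s, X i ω ∂P = ∏ i ∈ s, ∫ ω, X i ω ∂P := by
  simp_rw [← prod_coe_sort s]
  exact (hX.precomp Subtype.val_injective).integral_fun_prod_eq_prod_integral
    fun i => (hmeas i).aestronglyMeasurable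

end ProbabilityTheory

section IIDSum

variable {Ω S ι : Type*} [MeasurableSpace Ω] [MeasurableSpace S] {P : Measure Ω}
  {π : Measure S} {ξ : ι → Ω → S} {ψ : S → ℝ} {p : ℕ}

lemma integrable_comp_pow_of_le [IsProbabilityMeasure P] {i : ι} (hξ : Measurable (ξ i))
    (hlaw : P.map (ξ i) = π) (hψ : Measurable ψ) (hmom : Integrable (fun s => |ψ s| ^ p) π)
    {j : ℕ} (hj : j ≤ p) :
    Integrable (fun ω => ψ (ξ i ω) ^ j) P := by
  rw [← hlaw] at hmom
  have hp : Integrable (fun ω => ‖ψ (ξ i ω)‖ ^ p) P :=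
    (integrable_map_measure (hψ.abs.pow_const p).aestronglyMeasurable hξ.aemeasurable).1 hmom
  have hj := integrable_norm_pow_of_le (hψ.comp hξ).aestronglyMeasurable hj hp
  exact (integrable_norm_iff ((hψ.comp hξ).pow_const j).aestronglyMeasurable).1
    (by simpa only [norm_pow] using hj)

lemma integrable_prod_comp_pow [IsProbabilityMeasure P] (hξ : ∀ i, Measurable (ξ i))
    (hlaw : ∀ i, P.map (ξ i) = π) (hiid : iIndepFun ξ P) (hψ : Measurable ψ)
    (hmom : Integrable (fun s => |ψ s| ^ p) π) {s : Finset ι} {k : ι → ℕ}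
    (hk : ∀ i ∈ s, k i ≤ p) :
    Integrable (fun ω => ∏ i ∈ s, ψ (ξ i ω) ^ k i) P :=
  (hiid.comp (fun i x => ψ x ^ k i) fun _ => hψ.pow_const _).integrable_finset_prod
    (fun i => (hψ.comp (hξ i)).pow_const _)
    fun i hi => integrable_comp_pow_of_le (hξ i) (hlaw i) hψ hmom (hk i hi)

lemma integral_prod_comp_pow (hξ : ∀ i, Measurable (ξ i)) (hlaw : ∀ i, P.map (ξ i) = π)
    (hiid : iIndepFun ξ P) (hψ : Measurable ψ) (s : Finset ι) (k : ι → ℕ) :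
    ∫ ω, ∏ i ∈ s, ψ (ξ i ω) ^ k i ∂P = ∏ i ∈ s, ∫ x, ψ x ^ k i ∂π := by
  have hind : iIndepFun (fun i ω => ψ (ξ i ω) ^ k i) P :=
    hiid.comp (fun i x => ψ x ^ k i) fun _ => hψ.pow_const _
  rw [hind.integral_finset_prod fun i => (hψ.comp (hξ i)).pow_const _]
  refine prod_congr rfl fun i _ => ?_
  rw [← hlaw i, integral_map (hξ i).aemeasurable (hψ.pow_const _).aestronglyMeasurable]

lemma integrable_sum_comp_pow [IsProbabilityMeasure P] (hξ : ∀ i, Measurable (ξ i))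
    (hlaw : ∀ i, P.map (ξ i) = π) (hiid : iIndepFun ξ P) (hψ : Measurable ψ)
    (hmom : Integrable (fun s => |ψ s| ^ p) π) (s : Finset ι) :
    Integrable (fun ω => (∑ i ∈ s, ψ (ξ i ω)) ^ p) P := by
  classical
  simp_rw [sum_pow_eq_sum_piAntidiag]
  exact integrable_finsetSum _ fun k hk =>
    (integrable_prod_comp_pow hξ hlaw hiid hψ hmom fun i => le_of_mem_piAntidiag hk).const_mul _

lemma integral_sum_comp_pow [IsProbabilityMeasure P] [IsProbabilityMeasure π]
    (hξ : ∀ i, Measurable (ξ i)) (hlaw : ∀ i, P.map (ξ i) = π) (hiid : iIndepFun ξ P)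
    (hψ : Measurable ψ) (hmom : Integrable (fun s => |ψ s| ^ p) π) (hp : p ≠ 0)
    (s : Finset ι) :
    ∫ ω, (∑ i ∈ s, ψ (ξ i ω)) ^ p ∂P =
      ∑ n ∈ Icc 1 p, ((#s).choose n : ℝ) * compositionSum (fun j => ∫ x, ψ x ^ j ∂π) n p := by
  classical
  simp_rw [sum_pow_eq_sum_piAntidiag]
  rw [integral_finsetSum _ fun k hk =>
    (integrable_prod_comp_pow hξ hlaw hiid hψ hmom fun i => le_of_mem_piAntidiag hk).const_mul _]
  simp_rw [integral_const_mul, integral_prod_comp_pow hξ hlaw hiid hψ]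
  exact sum_piAntidiag_multinomial_mul_prod (c := fun j => ∫ x, ψ x ^ j ∂π) s (by simp) hp

lemma integral_norm_sum_comp_pow_le [IsProbabilityMeasure P] [IsProbabilityMeasure π]
    (hξ : ∀ i, Measurable (ξ i)) (hlaw : ∀ i, P.map (ξ i) = π) (hiid : iIndepFun ξ P)
    (hψ : Measurable ψ) (hmom : Integrable (fun s => |ψ s| ^ p) π) (hp : p ≠ 0)
    (s : Finset ι) :
    ∫ ω, ‖(∑ i ∈ s, ψ (ξ i ω)) ^ p‖ ∂P ≤
      ∑ n ∈ Icc 1 p, ((#s).choose n : ℝ) * compositionSum (fun j => ∫ x, |ψ x| ^ j ∂π) n p := by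
  have habs : Integrable (fun s => |(|ψ s|)| ^ p) π := by simpa only [abs_abs] using hmom
  rw [← integral_sum_comp_pow hξ hlaw hiid hψ.abs habs hp s]
  refine integral_mono (integrable_sum_comp_pow hξ hlaw hiid hψ hmom s).norm
    (integrable_sum_comp_pow hξ hlaw hiid hψ.abs habs s) fun ω => ?_
  rw [norm_pow, Real.norm_eq_abs]
  exact pow_le_pow_left₀ (abs_nonneg _) (abs_sum_le_sum_abs _ _) p

end IIDSum

section IndependentIndex

lemma iUnion_preimage_singleton {α β : Type*} (f : α → β) : ⋃ y, f ⁻¹' {y} = Set.univ := by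
  ext; simp

variable {Ω β : Type*} [MeasurableSpace Ω] [MeasurableSpace β] {P : Measure Ω}

lemma setLIntegral_preimage_eq_mul_of_indepFun {X : Ω → β} {g : Ω → ℝ≥0∞}
    (hXg : IndepFun X g P) (hX : Measurable X) (hg : Measurable g) {B : Set β}
    (hB : MeasurableSet B) :
    ∫⁻ ω in X ⁻¹' B, g ω ∂P = P (X ⁻¹' B) * ∫⁻ ω, g ω ∂P := by
  have hind : IndepFun ((X ⁻¹' B).indicator 1) g P :=
    hXg.comp (φ := B.indicator (1 : β → ℝ≥0∞)) (measurable_one.indicator hB) measurable_id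
  rw [← lintegral_indicator (hX hB), ← lintegral_indicator_one (hX hB),
    ← lintegral_mul_eq_lintegral_mul_lintegral_of_indepFun (measurable_one.indicator (hX hB)) hg
      hind]
  congr with ω
  by_cases hω : X ω ∈ B <;> simp [hω]

lemma setIntegral_preimage_eq_mul_of_indepFun {X : Ω → β} {Y : Ω → ℝ}
    (hXY : IndepFun X Y P) (hX : Measurable X) (hY : AEStronglyMeasurable Y P) {B : Set β}
    (hB : MeasurableSet B) :
    ∫ ω in X ⁻¹' B, Y ω ∂P = P.real (X ⁻¹' B) * ∫ ω, Y ω ∂P :=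
  ((IndepFun_iff_Indep X Y P).1 hXY).setIntegral_eq_mul (f := id) hX.comap_le hY.aemeasurable
    ⟨B, hB, rfl⟩ aestronglyMeasurable_id

variable {N : Ω → ℕ}

lemma lintegral_comp_eq_tsum_of_indepFun (hN : Measurable N) {g : ℕ → Ω → ℝ≥0∞}
    (hg : ∀ m, Measurable (g m)) (hind : ∀ m, IndepFun N (g m) P) :
    ∫⁻ ω, g (N ω) ω ∂P = ∑' m, P (N ⁻¹' {m}) * ∫⁻ ω, g m ω ∂P := by
  have hfib (m : ℕ) : MeasurableSet (N ⁻¹' {m}) := hN (measurableSet_singleton m)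
  calc ∫⁻ ω, g (N ω) ω ∂P = ∑' m, ∫⁻ ω in N ⁻¹' {m}, g (N ω) ω ∂P := by
        rw [← lintegral_iUnion hfib (pairwise_disjoint_fiber N), iUnion_preimage_singleton N,
          setLIntegral_univ]
    _ = ∑' m, ∫⁻ ω in N ⁻¹' {m}, g m ω ∂P :=
        tsum_congr fun m => setLIntegral_congr_fun (hfib m) fun ω (hω : N ω = m) => by rw [hω]
    _ = _ := tsum_congr fun m =>
        setLIntegral_preimage_eq_mul_of_indepFun (hind m) hN (hg m) (measurableSet_singleton m)

lemma integral_comp_eq_tsum_of_indepFun (hN : Measurable N) {F : ℕ → Ω → ℝ}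
    (hF : ∀ m, AEStronglyMeasurable (F m) P) (hind : ∀ m, IndepFun N (F m) P)
    (hint : Integrable (fun ω => F (N ω) ω) P) :
    ∫ ω, F (N ω) ω ∂P = ∑' m, P.real (N ⁻¹' {m}) * ∫ ω, F m ω ∂P := by
  have hfib (m : ℕ) : MeasurableSet (N ⁻¹' {m}) := hN (measurableSet_singleton m)
  calc ∫ ω, F (N ω) ω ∂P = ∑' m, ∫ ω in N ⁻¹' {m}, F (N ω) ω ∂P := by
        rw [← integral_iUnion hfib (pairwise_disjoint_fiber N) hint.integrableOn,
          iUnion_preimage_singleton N, setIntegral_univ]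
    _ = ∑' m, ∫ ω in N ⁻¹' {m}, F m ω ∂P :=
        tsum_congr fun m => setIntegral_congr_fun (hfib m) fun ω (hω : N ω = m) => by rw [hω]
    _ = _ := tsum_congr fun m =>
        setIntegral_preimage_eq_mul_of_indepFun (hind m) hN (hF m) (measurableSet_singleton m)

lemma integrable_comp_of_indepFun [IsFiniteMeasure P] (hN : Measurable N) {F : ℕ → Ω → ℝ}
    (hF : ∀ m, Measurable (F m)) (hind : ∀ m, IndepFun N (F m) P)
    (hint : ∀ m, Integrable (F m) P)
    (hsum : Summable fun m => P.real (N ⁻¹' {m}) * ∫ ω, ‖F m ω‖ ∂P) :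
    Integrable (fun ω => F (N ω) ω) P := by
  have hmeas : Measurable fun ω => F (N ω) ω :=
    (measurable_from_prod_countable_left (f := fun q : Ω × ℕ => F q.2 q.1) hF).comp
      (measurable_id.prodMk hN)
  refine ⟨hmeas.aestronglyMeasurable, ?_⟩
  have hterm (m : ℕ) : P (N ⁻¹' {m}) * ∫⁻ ω, ‖F m ω‖ₑ ∂P =
      ENNReal.ofReal (P.real (N ⁻¹' {m}) * ∫ ω, ‖F m ω‖ ∂P) := by
    rw [ENNReal.ofReal_mul measureReal_nonneg, ofReal_integral_norm_eq_lintegral_enorm (hint m),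
      ofReal_measureReal]
  rw [HasFiniteIntegral, lintegral_comp_eq_tsum_of_indepFun hN (fun m => (hF m).enorm)
    fun m => (hind m).comp measurable_id measurable_enorm]
  simp_rw [hterm]
  rw [← ENNReal.ofReal_tsum_of_nonneg (fun m => by positivity) hsum]
  exact ENNReal.ofReal_lt_top

end IndependentIndex

lemma pow_div_factorial_mul_compositionSum (lam : ℝ) (c : ℕ → ℝ) (n p : ℕ) :
    lam ^ n / n.factorial * compositionSum c n p =
      ∑ k ∈ (Finset.Nat.antidiagonalTuple n p).filter (fun k => ∀ i, 1 ≤ k i),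
        ((p.factorial : ℝ) / (n.factorial * ∏ i, (k i).factorial)) * ∏ i, (lam * c (k i)) := by
  rw [compositionSum, mul_sum]
  refine sum_congr rfl fun k hk => ?_
  have hsum : ∑ i, k i = p := Nat.mem_antidiagonalTuple.1 (mem_filter.1 hk).1
  have hspec : (∏ i, ((k i).factorial : ℝ)) * Nat.multinomial univ k = p.factorial := by
    exact_mod_cast hsum ▸ Nat.multinomial_spec univ k
  rw [prod_mul_distrib, prod_const, card_univ, Fintype.card_fin, ← hspec]
  push_cast
  field_simp

/-- **Moment formula for a compound Poisson sum.** If `N` is Poisson of parameter `λ`,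
`(ξ_n)` are i.i.d. with law `π`, all jointly independent, `μ(φ) = ∑_{n<N} φ(ξ_n)` and
`ν = λ·π`, then for a positive integer `p` with `∫ |φ|^p dπ < ∞`, `μ(φ)` has a finite
`p`-th moment and
`E[μ(φ)^p] = ∑_{n=1}^{p} ∑_{k₁+⋯+kₙ=p, kᵢ≥1} (p!/(n! k₁!⋯kₙ!)) ν(φ^{k₁})⋯ν(φ^{kₙ})`. -/
theorem stmt_2 {Ω : Type*} [MeasurableSpace Ω] (P : Measure Ω) [IsProbabilityMeasure P]
    {S : Type*} [MeasurableSpace S] (π : Measure S) [IsProbabilityMeasure π]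
    (lam : ℝ) (hlam : 0 < lam)
    (N : Ω → ℕ) (hNmeas : Measurable N)
    (hNpois : ∀ n : ℕ,
      P {ω | N ω = n} = ENNReal.ofReal (Real.exp (-lam) * lam ^ n / n.factorial))
    (ξ : ℕ → Ω → S) (hξmeas : ∀ n, Measurable (ξ n))
    (hlaw : ∀ n, Measure.map (ξ n) P = π)
    (hiid : iIndepFun ξ P)
    (hjoint : IndepFun N (fun ω => fun n => ξ n ω) P)
    (φ : S → ℝ) (hφ : Measurable φ)
    (p : ℕ) (hp : 0 < p)
    (hmom : Integrable (fun s => |φ s| ^ p) π) :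
    Integrable (fun ω => (∑ n ∈ Finset.range (N ω), φ (ξ n ω)) ^ p) P ∧
    ∫ ω, (∑ n ∈ Finset.range (N ω), φ (ξ n ω)) ^ p ∂P =
      ∑ n ∈ Finset.Icc 1 p,
        ∑ k ∈ (Finset.Nat.antidiagonalTuple n p).filter (fun k => ∀ i, 1 ≤ k i),
          ((p.factorial : ℝ) / (n.factorial * ∏ i, (k i).factorial)) *
            ∏ i, (lam * ∫ s, φ s ^ (k i) ∂π) := by
  have hfiber (m : ℕ) : P.real (N ⁻¹' {m}) = Real.exp (-lam) * lam ^ m / m.factorial := by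
    rw [measureReal_def, show N ⁻¹' {m} = {ω | N ω = m} from rfl, hNpois,
      ENNReal.toReal_ofReal (by positivity)]
  have hFmeas (m : ℕ) : Measurable fun y : ℕ → S => (∑ i ∈ range m, φ (y i)) ^ p :=
    (Finset.measurable_sum _ fun i _ => hφ.comp (measurable_pi_apply i)).pow_const p
  have hint (m : ℕ) := integrable_sum_comp_pow hξmeas hlaw hiid hφ hmom (range m)
  have hind (m : ℕ) := hjoint.comp measurable_id (hFmeas m)
  have hsummable : Summable fun m =>
      P.real (N ⁻¹' {m}) * ∫ ω, ‖(∑ i ∈ range m, φ (ξ i ω)) ^ p‖ ∂P :=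
    (hasSum_poisson_mul_sum_choose lam (Icc 1 p)
      (compositionSum (fun j => ∫ x, |φ x| ^ j ∂π) · p)).summable.of_nonneg_of_le
      (fun m => by positivity) fun m => by
        rw [hfiber]
        refine mul_le_mul_of_nonneg_left ?_ (by positivity)
        simpa only [card_range] using
          integral_norm_sum_comp_pow_le hξmeas hlaw hiid hφ hmom hp.ne' (range m)
  have hNint := integrable_comp_of_indepFun hNmeas
    (fun m => (hFmeas m).comp (measurable_pi_lambda _ hξmeas)) hind hint hsummable
  refine ⟨hNint, ?_⟩
  rw [integral_comp_eq_tsum_of_indepFun hNmeas (fun m => (hint m).aestronglyMeasurable) hind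
    hNint]
  simp_rw [hfiber, integral_sum_comp_pow hξmeas hlaw hiid hφ hmom hp.ne', card_range]
  rw [(hasSum_poisson_mul_sum_choose lam _ _).tsum_eq]
  exact sum_congr rfl fun n _ => pow_div_factorial_mul_compositionSum lam _ n p
end

section
/- Let p be an even positive integer with ∫_S |φ|^p dπ < ∞, and suppose ν(φ^k) = 0 for every odd integer k < p. Then E[μ(φ)^p] ≥ ν(φ^p). -/
/-!
Conditionally on `N = n`, the compound sum is `S_n = Y_0 + ⋯ + Y_{n-1}` with `Y_i = φ(ξ_i)`
i.i.d. Expanding `(S_n + Y_n)^p` binomially and using independence, every term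
`C(p,j) E[S_n^j] E[Y^(p-j)]` is nonnegative: for even `j` both factors are even moments, for odd
`j` the second one is an odd moment of order `< p`, hence zero. Keeping the terms `j = p` and
`j = 0` gives `E[S_{n+1}^p] ≥ E[S_n^p] + E[Y^p]`, so `E[S_n^p] ≥ n ∫ φ^p dπ`. Averaging over the
Poisson law of `N`, which is independent of the `ξ_i`, yields `E[μ(φ)^p] ≥ E[N] ∫ φ^p dπ = ν(φ^p)`;
Jensen's bound `E[S_n^p] ≤ n^p ∫ |φ|^p dπ` keeps the Poisson average finite.
-/

open MeasureTheory ProbabilityTheory Finset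
open scoped ENNReal

lemma summable_pow_mul_pow_div_factorial (p : ℕ) (x : ℝ) :
    Summable fun n : ℕ => (n : ℝ) ^ p * x ^ n / n.factorial := by
  refine .of_norm_bounded
    ((Real.summable_pow_div_factorial (Real.exp 1 * |x|)).mul_left (p.factorial : ℝ)) fun n => ?_
  have hn : (n : ℝ) ^ p ≤ p.factorial * Real.exp 1 ^ n := by
    rw [Real.exp_one_pow, ← div_le_iff₀' (by positivity)]
    exact Real.pow_div_factorial_le_exp _ n.cast_nonneg p
  rw [norm_div, norm_mul, norm_pow, norm_pow, Real.norm_natCast, Real.norm_natCast,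
    Real.norm_eq_abs, mul_pow, ← mul_div_assoc, ← mul_assoc]
  gcongr

lemma tsum_nat_mul_poisson (lam : ℝ) :
    ∑' n : ℕ, (n : ℝ) * (Real.exp (-lam) * lam ^ n / n.factorial) = lam := by
  have hshift : HasSum
      (fun n : ℕ => ((n + 1 : ℕ) : ℝ) * (Real.exp (-lam) * lam ^ (n + 1) / (n + 1).factorial))
      (Real.exp (-lam) * lam * Real.exp lam) := by
    have hterm : ∀ n : ℕ, ((n + 1 : ℕ) : ℝ) * (Real.exp (-lam) * lam ^ (n + 1) / (n + 1).factorial)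
        = Real.exp (-lam) * lam * (lam ^ n / n.factorial) := by
      intro n
      rw [Nat.factorial_succ]
      push_cast
      field_simp
      ring
    rw [funext hterm, Real.exp_eq_exp_ℝ]
    exact (NormedSpace.expSeries_div_hasSum_exp lam).mul_left _
  rw [((hasSum_nat_add_iff'
    (f := fun n : ℕ => (n : ℝ) * (Real.exp (-lam) * lam ^ n / n.factorial)) 1).mp
    (by simpa using hshift)).tsum_eq, mul_right_comm, ← Real.exp_add]
  simp

lemma summable_poisson_mul_of_le_pow {lam M : ℝ} {p : ℕ} {a : ℕ → ℝ} (hlam : 0 ≤ lam)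
    (h0 : ∀ n, 0 ≤ a n) (hup : ∀ n : ℕ, a n ≤ n ^ p * M) :
    Summable fun n : ℕ => Real.exp (-lam) * lam ^ n / n.factorial * a n :=
  .of_nonneg_of_le (fun n => mul_nonneg (by positivity) (h0 n))
    (fun n => mul_le_mul_of_nonneg_left (hup n) (by positivity))
    (((summable_pow_mul_pow_div_factorial p lam).mul_left (Real.exp (-lam) * M)).congr
      fun n => by ring)

lemma mul_le_tsum_poisson_mul {lam m : ℝ} {a : ℕ → ℝ} (hlam : 0 ≤ lam)
    (hlow : ∀ n : ℕ, n * m ≤ a n)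
    (hsum : Summable fun n : ℕ => Real.exp (-lam) * lam ^ n / n.factorial * a n) :
    lam * m ≤ ∑' n : ℕ, Real.exp (-lam) * lam ^ n / n.factorial * a n :=
  calc lam * m = (∑' n : ℕ, (n : ℝ) * (Real.exp (-lam) * lam ^ n / n.factorial)) * m := by
        rw [tsum_nat_mul_poisson]
    _ = ∑' n : ℕ, Real.exp (-lam) * lam ^ n / n.factorial * (n * m) := by
        rw [← tsum_mul_right]
        exact tsum_congr fun n => by ring
    _ ≤ _ := by
        refine Summable.tsum_le_tsum
          (fun n => mul_le_mul_of_nonneg_left (hlow n) (by positivity)) ?_ hsum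
        exact ((summable_pow_mul_pow_div_factorial 1 lam).mul_left (Real.exp (-lam) * m)).congr
          fun n => by ring

section Moments

variable {Ω : Type*} [MeasurableSpace Ω] {P : Measure Ω} [IsProbabilityMeasure P] {p : ℕ}

lemma MeasureTheory.MemLp.integrable_pow_of_le {X : Ω → ℝ} (hX : MemLp X p P) {j : ℕ}
    (hj : j ≤ p) : Integrable (fun ω => X ω ^ j) P :=
  (hX.mono_exponent (by exact_mod_cast hj)).integrable_norm_pow'.mono'
    (hX.aestronglyMeasurable.pow j) (ae_of_all _ fun ω => by simp)

lemma integral_add_pow_of_indepFun {X Y : Ω → ℝ} (hXY : IndepFun X Y P) (hX : MemLp X p P)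
    (hY : MemLp Y p P) :
    ∫ ω, (X ω + Y ω) ^ p ∂P
      = ∑ j ∈ range (p + 1), (∫ ω, X ω ^ j ∂P) * (∫ ω, Y ω ^ (p - j) ∂P) * p.choose j := by
  have hXj : ∀ j ∈ range (p + 1), Integrable (fun ω => X ω ^ j) P := fun j hj =>
    hX.integrable_pow_of_le (Nat.lt_succ_iff.mp (mem_range.mp hj))
  have hYj : ∀ j, Integrable (fun ω => Y ω ^ (p - j)) P := fun j =>
    hY.integrable_pow_of_le (p.sub_le j)
  have hind : ∀ j, IndepFun (fun ω => X ω ^ j) (fun ω => Y ω ^ (p - j)) P := fun j =>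
    hXY.comp (measurable_id.pow_const j) (measurable_id.pow_const (p - j))
  have hint : ∀ j ∈ range (p + 1),
      Integrable (fun ω => X ω ^ j * Y ω ^ (p - j) * p.choose j) P := fun j hj =>
    ((hind j).integrable_mul (hXj j hj) (hYj j)).mul_const _
  simp_rw [add_pow]
  rw [integral_finsetSum _ hint]
  refine sum_congr rfl fun j hj => ?_
  rw [integral_mul_const, (hind j).integral_fun_mul_eq_mul_integral
    (hXj j hj).aestronglyMeasurable (hYj j).aestronglyMeasurable]

lemma integral_pow_add_integral_pow_le_of_indepFun {X Y : Ω → ℝ} (hXY : IndepFun X Y P)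
    (hX : MemLp X p P) (hY : MemLp Y p P) (hp : Even p) (hp0 : p ≠ 0)
    (hodd : ∀ k < p, Odd k → ∫ ω, Y ω ^ k ∂P = 0) :
    ∫ ω, X ω ^ p ∂P + ∫ ω, Y ω ^ p ∂P ≤ ∫ ω, (X ω + Y ω) ^ p ∂P := by
  set t : ℕ → ℝ := fun j => (∫ ω, X ω ^ j ∂P) * (∫ ω, Y ω ^ (p - j) ∂P) * p.choose j
  have ht : ∀ j ≤ p, 0 ≤ t j := by
    intro j hj
    rcases Nat.even_or_odd j with hje | hjo
    · have hpj : Even (p - j) := (Nat.even_sub hj).mpr (iff_of_true hp hje)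
      exact mul_nonneg (mul_nonneg (integral_nonneg fun ω => hje.pow_nonneg _)
        (integral_nonneg fun ω => hpj.pow_nonneg _)) (Nat.cast_nonneg _)
    · have hpj : p - j < p := Nat.sub_lt (Nat.pos_of_ne_zero hp0) hjo.pos
      simp [t, hodd _ hpj (Nat.Even.sub_odd hj hp hjo)]
  have h0 : t 0 ≤ ∑ j ∈ range p, t j :=
    single_le_sum (fun j hj => ht j (mem_range.mp hj).le) (mem_range.mpr (Nat.pos_of_ne_zero hp0))
  rw [integral_add_pow_of_indepFun hXY hX hY, sum_range_succ]
  simp only [t, pow_zero, integral_const, probReal_univ, smul_eq_mul, mul_one, one_mul,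
    Nat.sub_zero, Nat.sub_self, Nat.choose_zero_right, Nat.choose_self, Nat.cast_one] at h0 ⊢
  linarith

lemma sum_integral_pow_le_integral_sum_pow {Y : ℕ → Ω → ℝ} (hind : iIndepFun Y P)
    (hY : ∀ i, MemLp (Y i) p P) (hp : Even p) (hp0 : p ≠ 0)
    (hodd : ∀ i, ∀ k < p, Odd k → ∫ ω, Y i ω ^ k ∂P = 0) (n : ℕ) :
    ∑ i ∈ range n, ∫ ω, Y i ω ^ p ∂P ≤ ∫ ω, (∑ i ∈ range n, Y i ω) ^ p ∂P := by
  induction n with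
  | zero => simp [zero_pow hp0]
  | succ n ih =>
    have hS : MemLp (∑ i ∈ range n, Y i) p P := memLp_finsetSum' _ fun i _ => hY i
    have hSY : IndepFun (∑ i ∈ range n, Y i) (Y n) P :=
      hind.indepFun_finsetSum_of_notMem₀ (fun i => (hY i).aestronglyMeasurable.aemeasurable)
        notMem_range_self
    have := integral_pow_add_integral_pow_le_of_indepFun hSY hS (hY n) hp hp0 (hodd n)
    simp only [Finset.sum_apply] at this
    simp only [sum_range_succ]
    linarith

lemma integral_sum_pow_le {Y : ℕ → Ω → ℝ} (hY : ∀ i, MemLp (Y i) p P) {M : ℝ}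
    (hM : ∀ i, ∫ ω, |Y i ω| ^ p ∂P ≤ M) (n : ℕ) :
    ∫ ω, (∑ i ∈ range n, Y i ω) ^ p ∂P ≤ n ^ p * M := by
  rcases p with _ | q
  · simpa using hM 0
  have hpt : ∀ ω, (∑ i ∈ range n, Y i ω) ^ (q + 1) ≤ n ^ q * ∑ i ∈ range n, |Y i ω| ^ (q + 1) :=
    fun ω => calc
      _ ≤ |∑ i ∈ range n, Y i ω| ^ (q + 1) := by rw [← abs_pow]; exact le_abs_self _
      _ ≤ (∑ i ∈ range n, |Y i ω|) ^ (q + 1) := by gcongr; exact abs_sum_le_sum_abs _ _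
      _ ≤ _ := by
        simpa using pow_sum_le_card_mul_sum_pow (s := range n) (fun i _ => abs_nonneg (Y i ω)) q
  have hYp : ∀ i ∈ range n, Integrable (fun ω => |Y i ω| ^ (q + 1)) P := fun i _ =>
    (hY i).integrable_norm_pow'
  calc ∫ ω, (∑ i ∈ range n, Y i ω) ^ (q + 1) ∂P
      ≤ ∫ ω, n ^ q * ∑ i ∈ range n, |Y i ω| ^ (q + 1) ∂P :=
        integral_mono ((memLp_finsetSum _ fun i _ => hY i).integrable_pow_of_le le_rfl)
          ((integrable_finsetSum _ hYp).const_mul _) hpt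
    _ = n ^ q * ∑ i ∈ range n, ∫ ω, |Y i ω| ^ (q + 1) ∂P := by
        rw [integral_const_mul, integral_finsetSum _ hYp]
    _ ≤ n ^ q * (n * M) := by
        gcongr
        simpa using sum_le_sum fun i (_ : i ∈ range n) => hM i
    _ = n ^ (q + 1) * M := by ring

end Moments

section Randomization

variable {Ω X : Type*} [MeasurableSpace Ω] [MeasurableSpace X] {P : Measure Ω} [IsFiniteMeasure P]
  {N : Ω → ℕ} {V : Ω → X}

lemma lintegral_comp_eq_tsum_of_indepFun_s3 (hN : Measurable N) (hV : Measurable V)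
    (hNV : IndepFun N V P) {G : ℕ → X → ℝ≥0∞} (hG : ∀ n, Measurable (G n)) :
    ∫⁻ ω, G (N ω) (V ω) ∂P = ∑' n, P {ω | N ω = n} * ∫⁻ ω, G n (V ω) ∂P := by
  have hGm : Measurable (Function.uncurry G) := measurable_from_prod_countable_right hG
  calc ∫⁻ ω, G (N ω) (V ω) ∂P
      = ∫⁻ z, Function.uncurry G z ∂(P.map fun ω => (N ω, V ω)) :=
        (lintegral_map hGm (hN.prodMk hV)).symm
    _ = ∫⁻ n, ∫⁻ x, G n x ∂(P.map V) ∂(P.map N) := by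
        rw [hNV.map_prod_eq_prod_map_map hN.aemeasurable hV.aemeasurable,
          lintegral_prod _ hGm.aemeasurable]
        rfl
    _ = ∑' n, P {ω | N ω = n} * ∫⁻ ω, G n (V ω) ∂P := by
        rw [lintegral_countable']
        refine tsum_congr fun n => ?_
        rw [lintegral_map (hG n) hV, Measure.map_apply hN (measurableSet_singleton n), mul_comm]
        rfl

lemma integral_comp_eq_tsum_of_indepFun_s3 (hN : Measurable N) (hV : Measurable V)
    (hNV : IndepFun N V P) {g : ℕ → X → ℝ} (hg : ∀ n, Measurable (g n))
    (hg0 : ∀ n x, 0 ≤ g n x) (hint : ∀ n, Integrable (fun ω => g n (V ω)) P)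
    (hsum : Summable fun n => P.real {ω | N ω = n} * ∫ ω, g n (V ω) ∂P) :
    ∫ ω, g (N ω) (V ω) ∂P = ∑' n, P.real {ω | N ω = n} * ∫ ω, g n (V ω) ∂P := by
  have hmeas : AEStronglyMeasurable (fun ω => g (N ω) (V ω)) P :=
    ((measurable_from_prod_countable_right (f := Function.uncurry g) hg).comp
      (hN.prodMk hV)).aestronglyMeasurable
  have hterm : ∀ n, P {ω | N ω = n} * ∫⁻ ω, ENNReal.ofReal (g n (V ω)) ∂P
      = ENNReal.ofReal (P.real {ω | N ω = n} * ∫ ω, g n (V ω) ∂P) := fun n => by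
    rw [ENNReal.ofReal_mul measureReal_nonneg, ofReal_measureReal,
      ofReal_integral_eq_lintegral_ofReal (hint n) (ae_of_all _ fun ω => hg0 n (V ω))]
  have hnonneg : ∀ n, 0 ≤ P.real {ω | N ω = n} * ∫ ω, g n (V ω) ∂P := fun n =>
    mul_nonneg measureReal_nonneg (integral_nonneg fun ω => hg0 n (V ω))
  rw [integral_eq_lintegral_of_nonneg_ae (ae_of_all _ fun ω => hg0 _ _) hmeas,
    lintegral_comp_eq_tsum_of_indepFun_s3 hN hV hNV (G := fun n x => ENNReal.ofReal (g n x))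
      fun n => (hg n).ennreal_ofReal]
  simp only [hterm]
  rw [← ENNReal.ofReal_tsum_of_nonneg hnonneg hsum, ENNReal.toReal_ofReal (tsum_nonneg hnonneg)]

end Randomization

/-- **Lower bound for even moments of a compound Poisson sum.** If `N` is Poisson of
parameter `λ`, `(ξ_n)` are i.i.d. with law `π`, all jointly independent,
`μ(φ) = ∑_{n<N} φ(ξ_n)` and `ν = λ·π`, `p` is an even positive integer with
`∫ |φ|^p dπ < ∞` and `ν(φ^k) = 0` for every odd `k < p`, then `E[μ(φ)^p] ≥ ν(φ^p)`. -/
theorem stmt_3 {Ω : Type*} [MeasurableSpace Ω] (P : Measure Ω) [IsProbabilityMeasure P]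
    {S : Type*} [MeasurableSpace S] (π : Measure S) [IsProbabilityMeasure π]
    (lam : ℝ) (hlam : 0 < lam)
    (N : Ω → ℕ) (hNmeas : Measurable N)
    (hNpois : ∀ n : ℕ,
      P {ω | N ω = n} = ENNReal.ofReal (Real.exp (-lam) * lam ^ n / n.factorial))
    (ξ : ℕ → Ω → S) (hξmeas : ∀ n, Measurable (ξ n))
    (hlaw : ∀ n, Measure.map (ξ n) P = π)
    (hiid : iIndepFun ξ P)
    (hjoint : IndepFun N (fun ω => fun n => ξ n ω) P)
    (φ : S → ℝ) (hφ : Measurable φ)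
    (p : ℕ) (hp : 0 < p) (hpeven : Even p)
    (hmom : Integrable (fun s => |φ s| ^ p) π)
    (hodd : ∀ k < p, Odd k → lam * ∫ s, φ s ^ k ∂π = 0) :
    lam * ∫ s, φ s ^ p ∂π ≤
      ∫ ω, (∑ n ∈ Finset.range (N ω), φ (ξ n ω)) ^ p ∂P := by
  set a : ℕ → ℝ := fun n => ∫ ω, (∑ i ∈ range n, φ (ξ i ω)) ^ p ∂P
  have hlawint : ∀ i {f : S → ℝ}, Measurable f → ∫ ω, f (ξ i ω) ∂P = ∫ s, f s ∂π :=
    fun i f hf => by rw [← hlaw i, integral_map (hξmeas i).aemeasurable hf.aestronglyMeasurable]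
  have hφp : MemLp φ p π := by
    refine (integrable_norm_rpow_iff hφ.aestronglyMeasurable (by simpa using hp.ne')
      (ENNReal.natCast_ne_top p)).mp ?_
    simpa using hmom
  have hY : ∀ i, MemLp (fun ω => φ (ξ i ω)) p P := fun i =>
    hφp.comp_measurePreserving ⟨hξmeas i, hlaw i⟩
  have hlow : ∀ n : ℕ, n * ∫ s, φ s ^ p ∂π ≤ a n := fun n => by
    have := sum_integral_pow_le_integral_sum_pow (Y := fun i ω => φ (ξ i ω))
      (hiid.comp (fun _ => φ) fun _ => hφ) hY hpeven hp.ne'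
      (fun i k hk hko => by
        rw [hlawint i (hφ.pow_const k)]
        exact (mul_eq_zero.mp (hodd k hk hko)).resolve_left hlam.ne') n
    simpa [hlawint _ (hφ.pow_const p)] using this
  have hsum := summable_poisson_mul_of_le_pow hlam.le
    (fun n => integral_nonneg fun ω => hpeven.pow_nonneg _)
    (integral_sum_pow_le hY fun i => (hlawint i (hφ.abs.pow_const p)).le)
  have hc : ∀ n, P.real {ω | N ω = n} = Real.exp (-lam) * lam ^ n / n.factorial := fun n => by
    rw [measureReal_def, hNpois, ENNReal.toReal_ofReal (by positivity)]
  have hF := integral_comp_eq_tsum_of_indepFun_s3 hNmeas (measurable_pi_lambda _ hξmeas) hjoint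
    (g := fun n v => (∑ i ∈ range n, φ (v i)) ^ p)
    (fun n => (measurable_sum _ fun i _ => hφ.comp (measurable_pi_apply i)).pow_const p)
    (fun n v => hpeven.pow_nonneg _)
    (fun n => (memLp_finsetSum _ fun i _ => hY i).integrable_pow_of_le le_rfl)
    (by simpa only [hc] using hsum)
  simp only [hc] at hF
  exact hF ▸ mul_le_tsum_poisson_mul hlam.le hlow hsum
end

section
/- Let p be an even positive integer with ∫_S |φ|^p dπ < ∞, and suppose that ν(|φ|^k) ≤ ν(|φ|^p)^{k/p} for every integer 1 ≤ k ≤ p. Then E[|μ(φ)|^p] ≤ e · p^p · ν(|φ|^p), where e is Euler's number. -/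
/-!
Put `Y i = |φ (ξ i)|` and `m k = E[(∑_{i<N} Y i)^k]`. The `k`-th moment of a sum of `n` i.i.d.
copies of `Y 0` is `k!` times the `k`-th coefficient of `F^n`, where `F` is the exponential
generating function of the moments of `Y 0`. Differentiating `F^(n+1)` and using the Poisson
identity `(n+1) P(N = n+1) = λ P(N = n)` gives
`m (k+1) = ∑_{i+j=k} C(k,i) ν(|φ|^(i+1)) m j`. The hypothesis `ν(|φ|^i) ≤ ν(|φ|^p)^(i/p)` makes
this dominated by the Bell recursion, so `m p ≤ B_p ν(|φ|^p) ≤ p^p ν(|φ|^p)`; finally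
`|μ(φ)| ≤ ∑_{i<N} Y i`.
-/

open MeasureTheory ProbabilityTheory PowerSeries Finset
open scoped ENNReal

theorem Nat.bell_le_pow_self (n : ℕ) : n.bell ≤ n ^ n := by
  induction n using Nat.strong_induction_on with
  | _ n ih =>
    rcases n with _ | n
    · simp
    calc (n + 1).bell = ∑ ij ∈ antidiagonal n, n.choose ij.1 * ij.2.bell := Nat.bell_succ' n
      _ ≤ ∑ ij ∈ antidiagonal n, n.choose ij.1 • (1 ^ ij.1 * n ^ ij.2) := by
        refine sum_le_sum fun ij hij => ?_
        have hj : ij.2 ≤ n := by have := mem_antidiagonal.mp hij; omega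
        rw [one_pow, one_mul, smul_eq_mul]
        gcongr
        exact (ih _ (by omega)).trans (Nat.pow_le_pow_left hj _)
      _ = (n + 1) ^ n := by rw [← (Commute.one_left n).add_pow', add_comm]
      _ ≤ (n + 1) ^ (n + 1) := Nat.pow_le_pow_right n.succ_pos n.le_succ

namespace CompoundPoisson

open scoped Nat

theorem le_bell_mul_pow {R : Type*} [CommSemiring R] [PartialOrder R] [IsOrderedRing R]
    {m : ℕ → R} {c : R} (hc : 0 ≤ c) {K : ℕ} (h0 : m 0 ≤ 1)
    (hm : ∀ k < K, m (k + 1) ≤ ∑ ij ∈ antidiagonal k, k.choose ij.1 * c ^ (ij.1 + 1) * m ij.2) :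
    ∀ k ≤ K, m k ≤ k.bell * c ^ k := by
  intro k
  induction k using Nat.strong_induction_on with
  | _ k ih =>
    rcases k with _ | k
    · simpa using h0
    intro hk
    calc m (k + 1) ≤ ∑ ij ∈ antidiagonal k, k.choose ij.1 * c ^ (ij.1 + 1) * m ij.2 := hm k hk
      _ ≤ ∑ ij ∈ antidiagonal k, k.choose ij.1 * c ^ (ij.1 + 1) * (ij.2.bell * c ^ ij.2) := by
        gcongr with ij hij
        have := mem_antidiagonal.mp hij
        exact ih _ (by omega) (by omega)
      _ = (∑ ij ∈ antidiagonal k, (k.choose ij.1 * ij.2.bell : ℕ)) * c ^ (k + 1) := by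
        push_cast
        rw [sum_mul]
        refine sum_congr rfl fun ij hij => ?_
        rw [← (mem_antidiagonal.mp hij)]
        ring
      _ = (k + 1).bell * c ^ (k + 1) := by rw [Nat.bell_succ']

noncomputable def egf (A : ℕ → ℝ≥0∞) : PowerSeries ℝ≥0∞ :=
  mk fun j => A j / (j ! : ℝ≥0∞)

noncomputable def sumMoment (A : ℕ → ℝ≥0∞) (n k : ℕ) : ℝ≥0∞ :=
  k ! * coeff k (egf A ^ n)

theorem derivative_egf (A : ℕ → ℝ≥0∞) :
    derivative ℝ≥0∞ (egf A) = egf fun i => A (i + 1) := by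
  ext i
  have hi : ((i : ℝ≥0∞) + 1) ≠ 0 := by simp
  rw [coeff_derivative, egf, egf, coeff_mk, coeff_mk, Nat.factorial_succ, Nat.cast_mul,
    ENNReal.div_eq_inv_mul, ENNReal.div_eq_inv_mul,
    ENNReal.mul_inv (by simp) (by simp), Nat.cast_succ]
  calc ((i : ℝ≥0∞) + 1)⁻¹ * (i ! : ℝ≥0∞)⁻¹ * A (i + 1) * ((i : ℝ≥0∞) + 1)
      = (((i : ℝ≥0∞) + 1)⁻¹ * ((i : ℝ≥0∞) + 1)) * ((i ! : ℝ≥0∞)⁻¹ * A (i + 1)) := by ring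
    _ = _ := by rw [ENNReal.inv_mul_cancel hi (by simp), one_mul]

theorem factorial_mul_coeff_egf_mul (B : ℕ → ℝ≥0∞) (G : PowerSeries ℝ≥0∞) (k : ℕ) :
    k ! * coeff k (egf B * G) =
      ∑ ij ∈ antidiagonal k, k.choose ij.1 * B ij.1 * (ij.2 ! * coeff ij.2 G) := by
  rw [coeff_mul, mul_sum]
  refine sum_congr rfl fun ⟨i, j⟩ hij => ?_
  rw [HasAntidiagonal.mem_antidiagonal] at hij
  subst hij
  have hi : (i ! : ℝ≥0∞) ≠ 0 := by exact_mod_cast i.factorial_ne_zero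
  rw [egf, coeff_mk, ← Nat.add_choose_mul_factorial_mul_factorial, ← Nat.choose_symm_add]
  push_cast
  calc ((i + j).choose i : ℝ≥0∞) * i ! * j ! * (B i / i ! * coeff j G)
      = (i + j).choose i * (i ! * (B i / i !)) * (j ! * coeff j G) := by ring
    _ = _ := by rw [ENNReal.mul_div_cancel hi (by simp)]

theorem sumMoment_zero_left (A : ℕ → ℝ≥0∞) (k : ℕ) :
    sumMoment A 0 k = if k = 0 then 1 else 0 := by
  rw [sumMoment, pow_zero, coeff_one]
  split_ifs <;> simp_all

theorem sumMoment_succ_left (A : ℕ → ℝ≥0∞) (n k : ℕ) :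
    sumMoment A (n + 1) k =
      ∑ ij ∈ antidiagonal k, k.choose ij.1 * A ij.1 * sumMoment A n ij.2 := by
  rw [sumMoment, pow_succ', factorial_mul_coeff_egf_mul]
  rfl

theorem sumMoment_succ_succ (A : ℕ → ℝ≥0∞) (n k : ℕ) :
    sumMoment A (n + 1) (k + 1) =
      (n + 1) * ∑ ij ∈ antidiagonal k, k.choose ij.1 * A (ij.1 + 1) * sumMoment A n ij.2 := by
  have hD : derivative ℝ≥0∞ (egf A ^ (n + 1)) =
      (n + 1) • (egf (fun i => A (i + 1)) * egf A ^ n) := by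
    rw [Derivation.leibniz_pow, derivative_egf, Nat.add_sub_cancel, smul_eq_mul, mul_comm]
  calc sumMoment A (n + 1) (k + 1)
      = k ! * (coeff (k + 1) (egf A ^ (n + 1)) * (k + 1)) := by
        rw [sumMoment, Nat.factorial_succ]; push_cast; ring
    _ = (n + 1) * (k ! * coeff k (egf (fun i => A (i + 1)) * egf A ^ n)) := by
        rw [← coeff_derivative, hD, map_nsmul, nsmul_eq_mul]; push_cast; ring
    _ = _ := by rw [factorial_mul_coeff_egf_mul]; rfl

theorem tsum_mul_sumMoment_succ {W : ℕ → ℝ≥0∞} {c : ℝ≥0∞}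
    (hW : ∀ n, W (n + 1) * (n + 1) = c * W n) (A : ℕ → ℝ≥0∞) (k : ℕ) :
    ∑' n, W n * sumMoment A n (k + 1) =
      ∑ ij ∈ antidiagonal k, k.choose ij.1 * (c * A (ij.1 + 1)) *
        ∑' n, W n * sumMoment A n ij.2 := by
  have hterm : ∀ n, W (n + 1) * sumMoment A (n + 1) (k + 1) =
      ∑ ij ∈ antidiagonal k, k.choose ij.1 * (c * A (ij.1 + 1)) * (W n * sumMoment A n ij.2) := by
    intro n
    rw [sumMoment_succ_succ, ← mul_assoc, hW, mul_sum]
    refine sum_congr rfl fun _ _ => ?_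
    ring
  rw [tsum_eq_zero_add' ENNReal.summable, sumMoment_zero_left, if_neg k.succ_ne_zero, mul_zero,
    zero_add, tsum_congr hterm, Summable.tsum_finsetSum fun _ _ => ENNReal.summable]
  simp_rw [ENNReal.tsum_mul_left]

section Probability

variable {Ω : Type*} [MeasurableSpace Ω] {P : Measure Ω}

theorem lintegral_sum_range_pow [IsProbabilityMeasure P] {Y : ℕ → Ω → ℝ≥0∞}
    (hY : ∀ i, Measurable (Y i)) (hind : iIndepFun Y P) {A : ℕ → ℝ≥0∞}
    (hA : ∀ i j, ∫⁻ ω, Y i ω ^ j ∂P = A j) (n k : ℕ) :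
    ∫⁻ ω, (∑ i ∈ range n, Y i ω) ^ k ∂P = sumMoment A n k := by
  induction n generalizing k with
  | zero => cases k <;> simp [sumMoment_zero_left]
  | succ n ih =>
    have hS : Measurable fun ω => ∑ i ∈ range n, Y i ω := Finset.measurable_sum _ fun i _ => hY i
    have hindep : IndepFun (Y n) (fun ω => ∑ i ∈ range n, Y i ω) P := by
      have := hind.indepFun_finsetSum_of_notMem hY (notMem_range_self (n := n))
      simpa only [Finset.sum_fn] using this.symm
    calc ∫⁻ ω, (∑ i ∈ range (n + 1), Y i ω) ^ k ∂P
        = ∫⁻ ω, ∑ ij ∈ antidiagonal k,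
            k.choose ij.1 * (Y n ω ^ ij.1 * (∑ i ∈ range n, Y i ω) ^ ij.2) ∂P := by
          refine lintegral_congr fun ω => ?_
          rw [sum_range_succ, add_comm, (Commute.all (Y n ω) _).add_pow']
          simp_rw [nsmul_eq_mul]
      _ = ∑ ij ∈ antidiagonal k, k.choose ij.1 * (A ij.1 * sumMoment A n ij.2) := by
          have hYn := hY n
          rw [lintegral_finsetSum _ fun ij _ => by fun_prop]
          refine sum_congr rfl fun ij _ => ?_
          rw [lintegral_const_mul _ (by fun_prop),
            lintegral_mul_eq_lintegral_mul_lintegral_of_indepFun''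
              ((hY n).pow_const _).aemeasurable (hS.pow_const _).aemeasurable
              (hindep.comp (measurable_id.pow_const _) (measurable_id.pow_const _)),
            hA, ih]
      _ = sumMoment A (n + 1) k := by
          simp_rw [sumMoment_succ_left, mul_assoc]

theorem lintegral_comp_eq_tsum_of_indepFun {β : Type*} [MeasurableSpace β] {N : Ω → ℕ}
    {X : Ω → β} (hN : Measurable N) (hX : Measurable X) (hNX : IndepFun N X P) {G : ℕ → β → ℝ≥0∞}
    (hG : ∀ n, Measurable (G n)) :
    ∫⁻ ω, G (N ω) (X ω) ∂P = ∑' n, P {ω | N ω = n} * ∫⁻ ω, G n (X ω) ∂P := by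
  have hE : ∀ n, MeasurableSet {ω | N ω = n} := fun n => hN (measurableSet_singleton n)
  have hsplit : ∀ ω, G (N ω) (X ω) = ∑' n, {ω | N ω = n}.indicator 1 ω * G n (X ω) := by
    intro ω
    rw [tsum_eq_single (N ω) fun n hn => by simp [Set.indicator, Ne.symm hn]]
    simp
  simp_rw [hsplit]
  rw [lintegral_tsum (f := fun n ω => {ω | N ω = n}.indicator 1 ω * G n (X ω))
    fun n => ((measurable_one.indicator (hE n)).mul ((hG n).comp hX)).aemeasurable]
  refine tsum_congr fun n => ?_
  have hind : IndepFun ({ω | N ω = n}.indicator 1) (fun ω => G n (X ω)) P :=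
    hNX.comp (measurable_of_countable (({n} : Set ℕ).indicator (1 : ℕ → ℝ≥0∞))) (hG n)
  rw [lintegral_mul_eq_lintegral_mul_lintegral_of_indepFun'' (g := fun ω => G n (X ω))
    (measurable_one.indicator (hE n)).aemeasurable ((hG n).comp hX).aemeasurable hind,
    lintegral_indicator_one (hE n)]

theorem ofReal_poisson_succ_mul {lam : ℝ} (hlam : 0 ≤ lam) (n : ℕ) :
    ENNReal.ofReal (Real.exp (-lam) * lam ^ (n + 1) / (n + 1)!) * (n + 1) =
      ENNReal.ofReal lam * ENNReal.ofReal (Real.exp (-lam) * lam ^ n / n !) := by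
  rw [← ENNReal.ofReal_natCast, ← ENNReal.ofReal_one,
    ← ENNReal.ofReal_add (by positivity) zero_le_one,
    ← ENNReal.ofReal_mul (by positivity), ← ENNReal.ofReal_mul hlam, Nat.factorial_succ]
  congr 1
  push_cast
  field_simp
  ring

section PoissonMixture

variable [IsProbabilityMeasure P] {Y : ℕ → Ω → ℝ≥0∞} {A : ℕ → ℝ≥0∞} {N : Ω → ℕ}

theorem lintegral_sum_range_pow_eq_tsum (hY : ∀ i, Measurable (Y i)) (hind : iIndepFun Y P)
    (hA : ∀ i j, ∫⁻ ω, Y i ω ^ j ∂P = A j) (hN : Measurable N)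
    (hNY : IndepFun N (fun ω i => Y i ω) P) (k : ℕ) :
    ∫⁻ ω, (∑ i ∈ range (N ω), Y i ω) ^ k ∂P = ∑' n, P {ω | N ω = n} * sumMoment A n k := by
  rw [lintegral_comp_eq_tsum_of_indepFun (G := fun n v => (∑ i ∈ range n, v i) ^ k) hN
    (measurable_pi_lambda _ hY) hNY fun n => by fun_prop]
  simp_rw [lintegral_sum_range_pow hY hind hA]

theorem lintegral_sum_range_poisson_pow_succ (hY : ∀ i, Measurable (Y i))
    (hind : iIndepFun Y P) (hA : ∀ i j, ∫⁻ ω, Y i ω ^ j ∂P = A j) (hN : Measurable N)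
    (hNY : IndepFun N (fun ω i => Y i ω) P) {lam : ℝ} (hlam : 0 ≤ lam)
    (hNpois : ∀ n : ℕ, P {ω | N ω = n} = ENNReal.ofReal (Real.exp (-lam) * lam ^ n / n !))
    (k : ℕ) :
    ∫⁻ ω, (∑ i ∈ range (N ω), Y i ω) ^ (k + 1) ∂P =
      ∑ ij ∈ antidiagonal k, k.choose ij.1 * (ENNReal.ofReal lam * A (ij.1 + 1)) *
        ∫⁻ ω, (∑ i ∈ range (N ω), Y i ω) ^ ij.2 ∂P := by
  simp_rw [lintegral_sum_range_pow_eq_tsum hY hind hA hN hNY]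
  refine tsum_mul_sumMoment_succ (fun n => ?_) A k
  rw [hNpois, hNpois]
  exact_mod_cast ofReal_poisson_succ_mul hlam n

end PoissonMixture

theorem lintegral_sum_range_enorm_pow_le_bell_mul_pow [IsProbabilityMeasure P] {S : Type*}
    [MeasurableSpace S] {π : Measure S} {N : Ω → ℕ} (hN : Measurable N) {lam : ℝ}
    (hlam : 0 ≤ lam)
    (hNpois : ∀ n : ℕ, P {ω | N ω = n} = ENNReal.ofReal (Real.exp (-lam) * lam ^ n / n !))
    {ξ : ℕ → Ω → S} (hξ : ∀ n, Measurable (ξ n)) (hlaw : ∀ n, Measure.map (ξ n) P = π)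
    (hiid : iIndepFun ξ P) (hjoint : IndepFun N (fun ω n => ξ n ω) P) {f : S → ℝ}
    (hf : Measurable f) {c : ℝ≥0∞} {p : ℕ}
    (hc : ∀ i < p, ENNReal.ofReal lam * ∫⁻ s, ‖f s‖ₑ ^ (i + 1) ∂π ≤ c ^ (i + 1)) :
    ∫⁻ ω, (∑ i ∈ range (N ω), ‖f (ξ i ω)‖ₑ) ^ p ∂P ≤ p.bell * c ^ p := by
  set Y : ℕ → Ω → ℝ≥0∞ := fun i ω => ‖f (ξ i ω)‖ₑ
  have hY : ∀ i, Measurable (Y i) := fun i => (hf.comp (hξ i)).enorm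
  have hYind : iIndepFun Y P := hiid.comp (fun _ s => ‖f s‖ₑ) fun _ => hf.enorm
  have hYmom : ∀ i j, ∫⁻ ω, Y i ω ^ j ∂P = ∫⁻ s, ‖f s‖ₑ ^ j ∂π := fun i j => by
    rw [← hlaw i, lintegral_map (by fun_prop) (hξ i)]
  have hNY : IndepFun N (fun ω i => Y i ω) P :=
    hjoint.comp (ψ := fun (v : ℕ → S) i => ‖f (v i)‖ₑ) measurable_id (by fun_prop)
  refine le_bell_mul_pow (m := fun k => ∫⁻ ω, (∑ i ∈ range (N ω), Y i ω) ^ k ∂P)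
    zero_le (by simp) (fun k hk => ?_) p le_rfl
  rw [lintegral_sum_range_poisson_pow_succ hY hYind hYmom hN hNY hlam hNpois]
  gcongr with ij hij
  exact hc _ (by have := mem_antidiagonal.mp hij; omega)

end Probability

theorem integral_le_of_lintegral_enorm_le {α : Type*} [MeasurableSpace α] {μ : Measure α}
    {f : α → ℝ} {b : ℝ} (hb : 0 ≤ b) (h : ∫⁻ x, ‖f x‖ₑ ∂μ ≤ ENNReal.ofReal b) :
    ∫ x, f x ∂μ ≤ b := by
  have := (enorm_integral_le_lintegral_enorm f).trans h
  rw [Real.enorm_eq_ofReal_abs, ENNReal.ofReal_le_ofReal_iff hb] at this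
  exact (le_abs_self _).trans this

theorem lintegral_enorm_pow_eq_ofReal_integral {α : Type*} [MeasurableSpace α] {μ : Measure α}
    {f : α → ℝ} {k : ℕ} (hf : Integrable (fun x => |f x| ^ k) μ) :
    ∫⁻ x, ‖f x‖ₑ ^ k ∂μ = ENNReal.ofReal (∫ x, |f x| ^ k ∂μ) := by
  have := ofReal_integral_norm_eq_lintegral_enorm hf
  simp_all

theorem ofReal_mul_lintegral_enorm_pow_le {α : Type*} [MeasurableSpace α] {μ : Measure α}
    [IsFiniteMeasure μ] {f : α → ℝ} (hf : AEStronglyMeasurable f μ) {lam : ℝ} (hlam : 0 ≤ lam)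
    {k p : ℕ} (hkp : k ≤ p) (hp : Integrable (fun x => |f x| ^ p) μ)
    (h : lam * ∫ x, |f x| ^ k ∂μ ≤ (lam * ∫ x, |f x| ^ p ∂μ) ^ ((k : ℝ) / p)) :
    ENNReal.ofReal lam * ∫⁻ x, ‖f x‖ₑ ^ k ∂μ ≤
      (ENNReal.ofReal (lam * ∫ x, |f x| ^ p ∂μ) ^ ((p : ℝ)⁻¹)) ^ k := by
  have hM : 0 ≤ lam * ∫ x, |f x| ^ p ∂μ :=
    mul_nonneg hlam (integral_nonneg fun x => by positivity)
  rw [lintegral_enorm_pow_eq_ofReal_integral (integrable_norm_pow_of_le hf hkp (by simpa using hp)),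
    ← ENNReal.ofReal_mul hlam, ← ENNReal.rpow_mul_natCast,
    ENNReal.ofReal_rpow_of_nonneg hM (by positivity), inv_mul_eq_div]
  exact ENNReal.ofReal_le_ofReal h

end CompoundPoisson

open CompoundPoisson

theorem stmt_4_general {Ω : Type*} [MeasurableSpace Ω] (P : Measure Ω) [IsProbabilityMeasure P]
    {S : Type*} [MeasurableSpace S] (π : Measure S) [IsProbabilityMeasure π]
    (lam : ℝ) (hlam : 0 < lam)
    (N : Ω → ℕ) (hNmeas : Measurable N)
    (hNpois : ∀ n : ℕ,
      P {ω | N ω = n} = ENNReal.ofReal (Real.exp (-lam) * lam ^ n / n.factorial))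
    (ξ : ℕ → Ω → S) (hξmeas : ∀ n, Measurable (ξ n))
    (hlaw : ∀ n, Measure.map (ξ n) P = π)
    (hiid : iIndepFun ξ P)
    (hjoint : IndepFun N (fun ω => fun n => ξ n ω) P)
    (φ : S → ℝ) (hφ : Measurable φ)
    (p : ℕ) (hp : 0 < p)
    (hmom : Integrable (fun s => |φ s| ^ p) π)
    (hmono : ∀ k : ℕ, 1 ≤ k → k ≤ p →
      lam * ∫ s, |φ s| ^ k ∂π ≤ (lam * ∫ s, |φ s| ^ p ∂π) ^ ((k : ℝ) / p)) :
    ∫ ω, |∑ n ∈ Finset.range (N ω), φ (ξ n ω)| ^ p ∂P ≤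
      Real.exp 1 * p ^ p * (lam * ∫ s, |φ s| ^ p ∂π) := by
  set M := lam * ∫ s, |φ s| ^ p ∂π
  have hmoment := lintegral_sum_range_enorm_pow_le_bell_mul_pow hNmeas hlam.le hNpois hξmeas hlaw
    hiid hjoint hφ fun i hi => ofReal_mul_lintegral_enorm_pow_le hφ.aestronglyMeasurable hlam.le hi
      hmom (hmono (i + 1) (by omega) hi)
  refine integral_le_of_lintegral_enorm_le (by positivity) ?_
  calc ∫⁻ ω, ‖|∑ n ∈ range (N ω), φ (ξ n ω)| ^ p‖ₑ ∂P
      ≤ ∫⁻ ω, (∑ i ∈ range (N ω), ‖φ (ξ i ω)‖ₑ) ^ p ∂P := by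
        gcongr with ω
        rw [enorm_pow, Real.enorm_abs]
        gcongr
        exact enorm_sum_le _ _
    _ ≤ p.bell * (ENNReal.ofReal M ^ ((p : ℝ)⁻¹)) ^ p := hmoment
    _ = p.bell * ENNReal.ofReal M := by rw [ENNReal.rpow_inv_natCast_pow hp.ne']
    _ ≤ ENNReal.ofReal (p ^ p) * ENNReal.ofReal M := by
        gcongr
        exact_mod_cast Nat.bell_le_pow_self p
    _ ≤ ENNReal.ofReal (Real.exp 1 * p ^ p * M) := by
        rw [← ENNReal.ofReal_mul (by positivity)]
        gcongr
        exact le_mul_of_one_le_left (by positivity) (Real.one_le_exp zero_le_one)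

/-- **Upper bound for even moments of a compound Poisson sum.** If `N` is Poisson of
parameter `λ`, `(ξ_n)` are i.i.d. with law `π`, all jointly independent,
`μ(φ) = ∑_{n<N} φ(ξ_n)` and `ν = λ·π`, `p` is an even positive integer with
`∫ |φ|^p dπ < ∞` and `ν(|φ|^k) ≤ ν(|φ|^p)^{k/p}` for all `1 ≤ k ≤ p`, then
`E[|μ(φ)|^p] ≤ e · p^p · ν(|φ|^p)`. -/
theorem stmt_4 {Ω : Type*} [MeasurableSpace Ω] (P : Measure Ω) [IsProbabilityMeasure P]
    {S : Type*} [MeasurableSpace S] (π : Measure S) [IsProbabilityMeasure π]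
    (lam : ℝ) (hlam : 0 < lam)
    (N : Ω → ℕ) (hNmeas : Measurable N)
    (hNpois : ∀ n : ℕ,
      P {ω | N ω = n} = ENNReal.ofReal (Real.exp (-lam) * lam ^ n / n.factorial))
    (ξ : ℕ → Ω → S) (hξmeas : ∀ n, Measurable (ξ n))
    (hlaw : ∀ n, Measure.map (ξ n) P = π)
    (hiid : iIndepFun ξ P)
    (hjoint : IndepFun N (fun ω => fun n => ξ n ω) P)
    (φ : S → ℝ) (hφ : Measurable φ)
    (p : ℕ) (hp : 0 < p) (hpeven : Even p)
    (hmom : Integrable (fun s => |φ s| ^ p) π)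
    (hmono : ∀ k : ℕ, 1 ≤ k → k ≤ p →
      lam * ∫ s, |φ s| ^ k ∂π ≤ (lam * ∫ s, |φ s| ^ p ∂π) ^ ((k : ℝ) / p)) :
    ∫ ω, |∑ n ∈ Finset.range (N ω), φ (ξ n ω)| ^ p ∂P ≤
      Real.exp 1 * p ^ p * (lam * ∫ s, |φ s| ^ p ∂π) :=
  stmt_4_general P π lam hlam N hNmeas hNpois ξ hξmeas hlaw hiid hjoint φ hφ p hp hmom hmono
end

section
/- Let I ⊂ ℝ be a compact set, θ a probability measure on I whose topological support is I, g : I → ℝ continuous and C : I → (0,∞) continuous. Then lim_{ε → 0⁺} [ log( ∫_I C(h) ε^{g(h)} θ(dh) ) / log ε ] = min_{h ∈ I} g(h) (Laplace-method evaluation of the small-ε scaling exponent of a θ-mixture of power laws). -/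
/-!
Write `F ε = ∫_I C(h) ε^{g(h)} θ(dh)` and `m = min_I g`. For `0 < ε < 1` the integrand is at most
`(max C) ε^m`, so `log F ≤ log (max C) + m log ε`; dividing by `log ε < 0` bounds the ratio below by
`m + o(1)`. Conversely, for `δ > 0` the set where `g < m + δ` contains `ball h₀ r ∩ I` for a
minimiser `h₀`; it has positive `θ`-mass because `θ` charges every ball around a point of `I` and
is carried by `I`. There the integrand is at least `(min C) ε^{m+δ}`, which bounds the ratio
above by `m + δ + o(1)`.
-/

open MeasureTheory Real Filter Set Topology

theorem log_mul_rpow_div_log {A ε : ℝ} (p : ℝ) (hA : 0 < A) (hε0 : 0 < ε) (hε1 : ε ≠ 1) :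
    log (A * ε ^ p) / log ε = p + log A / log ε := by
  have hlog : log ε ≠ 0 := log_ne_zero_of_pos_of_ne_one hε0 hε1
  rw [log_mul hA.ne' (rpow_pos_of_pos hε0 p).ne', log_rpow hε0]
  field_simp
  ring

theorem add_log_div_log_le_of_le_mul_rpow {F A ε p : ℝ} (hε0 : 0 < ε) (hε1 : ε < 1)
    (hF : 0 < F) (hFA : F ≤ A * ε ^ p) : p + log A / log ε ≤ log F / log ε := by
  have hA : 0 < A := pos_of_mul_pos_left (hF.trans_le hFA) (rpow_pos_of_pos hε0 p).le
  rw [← log_mul_rpow_div_log p hA hε0 hε1.ne]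
  exact div_le_div_of_nonpos_of_le (log_neg hε0 hε1).le (log_le_log hF hFA)

theorem log_div_log_le_add_of_mul_rpow_le {F a ε p : ℝ} (hε0 : 0 < ε) (hε1 : ε < 1)
    (ha : 0 < a) (haF : a * ε ^ p ≤ F) : log F / log ε ≤ p + log a / log ε := by
  rw [← log_mul_rpow_div_log p ha hε0 hε1.ne]
  exact div_le_div_of_nonpos_of_le (log_neg hε0 hε1).le (log_le_log (by positivity) haF)

theorem tendsto_add_div_log_nhdsGT_zero (A B : ℝ) :
    Tendsto (fun ε => A + B / log ε) (𝓝[>] 0) (𝓝 A) := by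
  simpa [div_eq_mul_inv] using
    tendsto_const_nhds.add (tendsto_log_nhdsGT_zero.inv_tendsto_atBot.const_mul B)

theorem tendsto_log_div_log_of_rpow_bounds {F : ℝ → ℝ} {m : ℝ}
    (hupper : ∃ A, ∀ᶠ ε in 𝓝[>] 0, F ε ≤ A * ε ^ m)
    (hlower : ∀ δ > 0, ∃ a > 0, ∀ᶠ ε in 𝓝[>] 0, a * ε ^ (m + δ) ≤ F ε) :
    Tendsto (fun ε => log (F ε) / log ε) (𝓝[>] 0) (𝓝 m) := by
  have hIoo : ∀ᶠ ε in 𝓝[>] (0 : ℝ), ε ∈ Ioo 0 1 := Ioo_mem_nhdsGT one_pos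
  obtain ⟨A, hA⟩ := hupper
  obtain ⟨a₁, ha₁, hF₁⟩ := hlower 1 one_pos
  rw [tendsto_order]
  refine ⟨fun b hb => ?_, fun b hb => ?_⟩
  · filter_upwards [(tendsto_add_div_log_nhdsGT_zero m (log A)).eventually
      (eventually_gt_nhds hb), hIoo, hA, hF₁] with ε hbε ⟨hε0, hε1⟩ hFA hFpos
    have hF : 0 < F ε := lt_of_lt_of_le (by positivity) hFpos
    exact hbε.trans_le (add_log_div_log_le_of_le_mul_rpow hε0 hε1 hF hFA)
  · obtain ⟨a, ha, hF⟩ := hlower ((b - m) / 2) (by linarith)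
    filter_upwards [(tendsto_add_div_log_nhdsGT_zero (m + (b - m) / 2) (log a)).eventually
      (eventually_lt_nhds (show m + (b - m) / 2 < b by linarith)), hIoo, hF] with ε hbε ⟨hε0, hε1⟩ haF
    exact (log_div_log_le_add_of_mul_rpow_le hε0 hε1 ha haF).trans_lt hbε

section PowerLawMixture

variable {I : Set ℝ} {θ : Measure ℝ} {g C : ℝ → ℝ} {ε : ℝ}

theorem integrableOn_mul_rpow [IsFiniteMeasureOnCompacts θ] (hI : IsCompact I)
    (hg : ContinuousOn g I) (hC : ContinuousOn C I) (hε : 0 < ε) :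
    IntegrableOn (fun h => C h * ε ^ g h) I θ :=
  (hC.mul ((continuous_const_rpow hε.ne').comp_continuousOn hg)).integrableOn_compact hI

theorem setIntegral_mul_rpow_le [IsFiniteMeasure θ] {M m : ℝ} (hI : MeasurableSet I)
    (hint : IntegrableOn (fun h => C h * ε ^ g h) I θ) (hCnn : ∀ h ∈ I, 0 ≤ C h)
    (hCM : ∀ h ∈ I, C h ≤ M) (hm : ∀ h ∈ I, m ≤ g h) (hε0 : 0 < ε) (hε1 : ε ≤ 1) :
    ∫ h in I, C h * ε ^ g h ∂θ ≤ θ.real I * (M * ε ^ m) := by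
  rw [← smul_eq_mul, ← setIntegral_const]
  refine setIntegral_mono_on hint (integrableOn_const (measure_ne_top _ _)) hI fun h hh => ?_
  exact mul_le_mul (hCM h hh) (rpow_le_rpow_of_exponent_ge hε0 hε1 (hm h hh))
    (rpow_nonneg hε0.le _) ((hCnn h hh).trans (hCM h hh))

theorem mul_rpow_le_setIntegral [IsFiniteMeasure θ] {B : Set ℝ} {c p : ℝ} (hI : MeasurableSet I)
    (hB : MeasurableSet B) (hBI : B ⊆ I) (hint : IntegrableOn (fun h => C h * ε ^ g h) I θ)
    (hCnn : ∀ h ∈ I, 0 ≤ C h) (hcC : ∀ h ∈ B, c ≤ C h) (hgp : ∀ h ∈ B, g h ≤ p)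
    (hε0 : 0 < ε) (hε1 : ε ≤ 1) :
    θ.real B * (c * ε ^ p) ≤ ∫ h in I, C h * ε ^ g h ∂θ := by
  have hnn : 0 ≤ᵐ[θ.restrict I] fun h => C h * ε ^ g h :=
    (ae_restrict_iff' hI).2 (ae_of_all _ fun h hh => mul_nonneg (hCnn h hh) (by positivity))
  calc θ.real B * (c * ε ^ p) = ∫ _ in B, c * ε ^ p ∂θ := by rw [setIntegral_const, smul_eq_mul]
    _ ≤ ∫ h in B, C h * ε ^ g h ∂θ :=
      setIntegral_mono_on (integrableOn_const (measure_ne_top _ _)) (hint.mono_set hBI) hB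
        fun h hh => mul_le_mul (hcC h hh) (rpow_le_rpow_of_exponent_ge hε0 hε1 (hgp h hh))
          (by positivity) (hCnn h (hBI hh))
    _ ≤ ∫ h in I, C h * ε ^ g h ∂θ := setIntegral_mono_set hint hnn hBI.eventuallyLE

theorem exists_setIntegral_le_mul_rpow [IsFiniteMeasure θ] {m : ℝ} (hI : IsCompact I)
    (hg : ContinuousOn g I) (hC : ContinuousOn C I) (hCnn : ∀ h ∈ I, 0 ≤ C h)
    (hm : ∀ h ∈ I, m ≤ g h) :
    ∃ A, ∀ᶠ ε in 𝓝[>] 0, ∫ h in I, C h * ε ^ g h ∂θ ≤ A * ε ^ m := by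
  obtain ⟨M, hM⟩ := hI.exists_bound_of_continuousOn hC
  refine ⟨θ.real I * M, ?_⟩
  filter_upwards [Ioo_mem_nhdsGT one_pos] with ε ⟨hε0, hε1⟩
  rw [mul_assoc]
  exact setIntegral_mul_rpow_le hI.measurableSet (integrableOn_mul_rpow hI hg hC hε0) hCnn
    (fun h hh => (le_abs_self _).trans (hM h hh)) hm hε0 hε1.le

theorem exists_mul_rpow_le_setIntegral [IsFiniteMeasure θ] (hI : IsCompact I) (hθI : θ Iᶜ = 0)
    (hθball : ∀ h ∈ I, ∀ r : ℝ, 0 < r → 0 < θ (Metric.ball h r))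
    (hg : ContinuousOn g I) (hC : ContinuousOn C I) (hCpos : ∀ h ∈ I, 0 < C h)
    {h₀ : ℝ} (h₀I : h₀ ∈ I) {δ : ℝ} (hδ : 0 < δ) :
    ∃ a > 0, ∀ᶠ ε in 𝓝[>] 0, a * ε ^ (g h₀ + δ) ≤ ∫ h in I, C h * ε ^ g h ∂θ := by
  obtain ⟨h₁, h₁I, -, hCmin⟩ := hI.exists_sInf_image_eq_and_le ⟨h₀, h₀I⟩ hC
  obtain ⟨r, hr, hgr⟩ := Metric.continuousWithinAt_iff.1 (hg h₀ h₀I) δ hδ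
  set B := Metric.ball h₀ r ∩ I
  have hθB : 0 < θ.real B := by
    rw [measureReal_def, measure_inter_conull hθI]
    exact ENNReal.toReal_pos (hθball h₀ h₀I r hr).ne' (measure_ne_top _ _)
  refine ⟨θ.real B * C h₁, mul_pos hθB (hCpos h₁ h₁I), ?_⟩
  filter_upwards [Ioo_mem_nhdsGT one_pos] with ε ⟨hε0, hε1⟩
  rw [mul_assoc]
  refine mul_rpow_le_setIntegral hI.measurableSet (measurableSet_ball.inter hI.measurableSet)
    inter_subset_right (integrableOn_mul_rpow hI hg hC hε0) (fun h hh => (hCpos h hh).le)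
    (fun h hh => hCmin h hh.2) (fun h hh => ?_) hε0 hε1.le
  have hdist := hgr hh.2 hh.1
  rw [Real.dist_eq] at hdist
  linarith [le_abs_self (g h - g h₀)]

end PowerLawMixture

/-- **Laplace-method evaluation of the small-`ε` scaling exponent of a mixture of power
laws.** Let `I ⊂ ℝ` be compact, `θ` a probability measure on `I` whose topological
support is `I`, `g : I → ℝ` continuous and `C : I → (0,∞)` continuous. Then
`log(∫_I C(h) ε^{g(h)} θ(dh)) / log ε → min_{h∈I} g(h)` as `ε → 0⁺`. -/
theorem stmt_17 (I : Set ℝ) (hIcomp : IsCompact I) (hIne : I.Nonempty)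
    (θ : Measure ℝ) [IsProbabilityMeasure θ]
    (hθI : θ Iᶜ = 0)
    (hθfull : ∀ h ∈ I, ∀ r : ℝ, 0 < r → 0 < θ (Metric.ball h r))
    (g : ℝ → ℝ) (hg : ContinuousOn g I)
    (C : ℝ → ℝ) (hC : ContinuousOn C I) (hCpos : ∀ h ∈ I, 0 < C h) :
    Tendsto (fun ε : ℝ => Real.log (∫ h in I, C h * ε ^ (g h) ∂θ) / Real.log ε)
      (nhdsWithin 0 (Set.Ioi 0)) (nhds (sInf (g '' I))) := by
  obtain ⟨h₀, h₀I, hsInf, hmin⟩ := hIcomp.exists_sInf_image_eq_and_le hIne hg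
  rw [hsInf]
  exact tendsto_log_div_log_of_rpow_bounds
    (exists_setIntegral_le_mul_rpow hIcomp hg hC (fun h hh => (hCpos h hh).le) hmin)
    fun δ hδ => exists_mul_rpow_le_setIntegral hIcomp hθI hθfull hg hC hCpos h₀I hδ
end

section
/- Let γ be a σ-finite measure on the set {(U, ℓ, T) ∈ (0,∞)³ : 0 < ℓ ≤ √T ≤ 1} with γ(U^q ℓ T) < ∞ for every even integer q ≥ 2. Suppose there exist α > 3 and β > 0 such that for every sufficiently large even integer p there is a constant C_p > 0 with γ[ U^p ℓ T · 1_{ℓ ≤ ε^{1−β}} ] ≤ C_p ε^α for all ε ∈ (0,1). Then there exist an even integer p and a constant C' > 0 such that γ[ U^p · ((ℓ ∧ ε)/ℓ)^p · ℓ T ] ≤ C' ε^α for all ε ∈ (0,1), where ℓ ∧ ε := min(ℓ, ε). -/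
open MeasureTheory Real
open scoped ENNReal

/-- If `γ` is a σ-finite measure on `{(U,ℓ,T) : 0 < ℓ ≤ √T ≤ 1}` with
`γ(U^q ℓ T) < ∞` for every even `q ≥ 2`, and if there are `α > 3`, `β > 0` such that
for every sufficiently large even integer `p` one has
`γ[U^p ℓT 1_{ℓ ≤ ε^{1−β}}] ≤ C_p ε^α` on `(0,1)`, then there are an even integer `p`
and `C' > 0` with `γ[U^p ((ℓ∧ε)/ℓ)^p ℓT] ≤ C' ε^α` for all `ε ∈ (0,1)`. -/
theorem stmt_19 (γ : Measure (ℝ × ℝ × ℝ)) [SigmaFinite γ]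
    (hsupp : γ {x : ℝ × ℝ × ℝ |
      ¬(0 < x.1 ∧ 0 < x.2.1 ∧ x.2.1 ≤ Real.sqrt x.2.2 ∧ Real.sqrt x.2.2 ≤ 1)} = 0)
    (hmom : ∀ q : ℕ, Even q → 2 ≤ q →
      (∫⁻ x, ENNReal.ofReal (x.1 ^ q * x.2.1 * x.2.2) ∂γ) < ⊤)
    (α β : ℝ) (hα : 3 < α) (hβ : 0 < β)
    (htail : ∃ p₀ : ℕ, ∀ p : ℕ, p₀ ≤ p → Even p →
      ∃ C : ℝ, 0 < C ∧ ∀ ε : ℝ, 0 < ε → ε < 1 →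
        (∫⁻ x in {x : ℝ × ℝ × ℝ | x.2.1 ≤ ε ^ (1 - β)},
            ENNReal.ofReal (x.1 ^ p * x.2.1 * x.2.2) ∂γ) ≤
          ENNReal.ofReal (C * ε ^ α)) :
    ∃ p : ℕ, Even p ∧ ∃ C' : ℝ, 0 < C' ∧ ∀ ε : ℝ, 0 < ε → ε < 1 →
      (∫⁻ x, ENNReal.ofReal
          (x.1 ^ p * ((min x.2.1 ε) / x.2.1) ^ p * (x.2.1 * x.2.2)) ∂γ) ≤
        ENNReal.ofReal (C' * ε ^ α) := by
  obtain ⟨p₀, hp₀⟩ := htail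
  set n := max p₀ (max 1 ⌈α / β⌉₊) with hn
  set p := 2 * n with hp
  have hpeven : Even p := even_two_mul n
  have hp2 : 2 ≤ p := by
    have : 1 ≤ n := le_max_of_le_right (le_max_left _ _)
    omega
  have hpp₀ : p₀ ≤ p := by
    have : p₀ ≤ n := le_max_left _ _
    omega
  have hpβ : α ≤ (p : ℝ) * β := by
    have h1 : α / β ≤ (⌈α / β⌉₊ : ℝ) := Nat.le_ceil _
    have h2 : (⌈α / β⌉₊ : ℝ) ≤ (p : ℝ) := by
      have h3 : ⌈α / β⌉₊ ≤ p := by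
        have : ⌈α / β⌉₊ ≤ n := le_max_of_le_right (le_max_right _ _)
        omega
      exact_mod_cast h3
    have := (div_le_iff₀ hβ).mp (h1.trans h2)
    linarith
  obtain ⟨C, hC, hCb⟩ := hp₀ p hpp₀ hpeven
  have hM : (∫⁻ x, ENNReal.ofReal (x.1 ^ p * x.2.1 * x.2.2) ∂γ) < ⊤ := hmom p hpeven hp2
  set M := (∫⁻ x, ENNReal.ofReal (x.1 ^ p * x.2.1 * x.2.2) ∂γ) with hMdef
  refine ⟨p, hpeven, C + M.toReal,
    add_pos_of_pos_of_nonneg hC ENNReal.toReal_nonneg, ?_⟩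
  intro ε hε hε1
  have hAE : ∀ᵐ x ∂γ, 0 < x.1 ∧ 0 < x.2.1 ∧ x.2.1 ≤ Real.sqrt x.2.2 ∧
      Real.sqrt x.2.2 ≤ 1 := ae_iff.mpr hsupp
  set S : Set (ℝ × ℝ × ℝ) := {x | x.2.1 ≤ ε ^ (1 - β)} with hSdef
  have hS : MeasurableSet S :=
    measurableSet_le (measurable_fst.comp measurable_snd) measurable_const
  set f : ℝ × ℝ × ℝ → ℝ≥0∞ := fun x => ENNReal.ofReal
      (x.1 ^ p * ((min x.2.1 ε) / x.2.1) ^ p * (x.2.1 * x.2.2)) with hfdef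
  have hsplit : (∫⁻ x, f x ∂γ) = (∫⁻ x in S, f x ∂γ) + (∫⁻ x in Sᶜ, f x ∂γ) :=
    (lintegral_add_compl f hS).symm
  -- bound on S
  have hb1 : (∫⁻ x in S, f x ∂γ) ≤ ENNReal.ofReal (C * ε ^ α) := by
    refine le_trans ?_ (hCb ε hε hε1)
    refine lintegral_mono_ae ?_
    filter_upwards [ae_restrict_of_ae hAE]
      with x hx
    obtain ⟨hU, hℓ, hsq, hsq1⟩ := hx
    have hT : 0 < x.2.2 := Real.sqrt_pos.mp (lt_of_lt_of_le hℓ hsq)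
    apply ENNReal.ofReal_le_ofReal
    have hr0 : 0 ≤ min x.2.1 ε / x.2.1 := div_nonneg (le_min hℓ.le hε.le) hℓ.le
    have hr1 : min x.2.1 ε / x.2.1 ≤ 1 := div_le_one_of_le₀ (min_le_left _ _) hℓ.le
    have hrp : (min x.2.1 ε / x.2.1) ^ p ≤ 1 := pow_le_one₀ hr0 hr1
    calc x.1 ^ p * (min x.2.1 ε / x.2.1) ^ p * (x.2.1 * x.2.2)
        ≤ x.1 ^ p * 1 * (x.2.1 * x.2.2) := by
          apply mul_le_mul_of_nonneg_right
            (mul_le_mul_of_nonneg_left hrp (by positivity)) (by positivity)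
      _ = x.1 ^ p * x.2.1 * x.2.2 := by ring
  -- bound on Sᶜ
  have hb2 : (∫⁻ x in Sᶜ, f x ∂γ) ≤ ENNReal.ofReal (ε ^ α) * M := by
    have hstep : (∫⁻ x in Sᶜ, f x ∂γ) ≤
        ∫⁻ x in Sᶜ, ENNReal.ofReal (ε ^ α * (x.1 ^ p * x.2.1 * x.2.2)) ∂γ := by
      refine lintegral_mono_ae ?_
      filter_upwards [ae_restrict_of_ae hAE,
        ae_restrict_mem hS.compl] with x hx hxS
      obtain ⟨hU, hℓ, hsq, hsq1⟩ := hx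
      have hT : 0 < x.2.2 := Real.sqrt_pos.mp (lt_of_lt_of_le hℓ hsq)
      have hxS' : ε ^ (1 - β) < x.2.1 := lt_of_not_ge hxS
      apply ENNReal.ofReal_le_ofReal
      have hr0 : 0 ≤ min x.2.1 ε / x.2.1 := div_nonneg (le_min hℓ.le hε.le) hℓ.le
      have hεβ : (0:ℝ) < ε ^ β := Real.rpow_pos_of_pos hε β
      have hr1 : min x.2.1 ε / x.2.1 ≤ ε ^ β := by
        have h1 : min x.2.1 ε / x.2.1 ≤ ε / x.2.1 := by
          gcongr
          exact min_le_right _ _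
        have h2 : ε / x.2.1 ≤ ε / ε ^ (1 - β) := by
          exact div_le_div_of_nonneg_left hε.le (Real.rpow_pos_of_pos hε _) hxS'.le
        have key : ε / ε ^ (1 - β) = ε ^ β := by
          rw [div_eq_iff (Real.rpow_pos_of_pos hε _).ne', ← Real.rpow_add hε,
            show β + (1 - β) = 1 by ring, Real.rpow_one]
        exact (h1.trans h2).trans_eq key
      have hrp : (min x.2.1 ε / x.2.1) ^ p ≤ ε ^ α := by
        calc (min x.2.1 ε / x.2.1) ^ p ≤ (ε ^ β) ^ p := pow_le_pow_left₀ hr0 hr1 p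
          _ = ε ^ (β * (p : ℝ)) := by
              rw [← Real.rpow_natCast (ε ^ β) p, ← Real.rpow_mul hε.le]
          _ ≤ ε ^ α := Real.rpow_le_rpow_of_exponent_ge hε hε1.le
              (by rw [mul_comm]; exact hpβ)
      calc x.1 ^ p * (min x.2.1 ε / x.2.1) ^ p * (x.2.1 * x.2.2)
          ≤ x.1 ^ p * ε ^ α * (x.2.1 * x.2.2) := by
            apply mul_le_mul_of_nonneg_right
              (mul_le_mul_of_nonneg_left hrp (by positivity)) (by positivity)
        _ = ε ^ α * (x.1 ^ p * x.2.1 * x.2.2) := by ring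
    refine hstep.trans ?_
    have : ∀ x : ℝ × ℝ × ℝ, ENNReal.ofReal (ε ^ α * (x.1 ^ p * x.2.1 * x.2.2)) =
        ENNReal.ofReal (ε ^ α) * ENNReal.ofReal (x.1 ^ p * x.2.1 * x.2.2) := by
      intro x; rw [ENNReal.ofReal_mul (by positivity)]
    simp_rw [this]
    rw [lintegral_const_mul' _ _ ENNReal.ofReal_ne_top]
    exact mul_le_mul_right (setLIntegral_le_lintegral _ _) _
  calc (∫⁻ x, f x ∂γ) ≤ ENNReal.ofReal (C * ε ^ α) + ENNReal.ofReal (ε ^ α) * M := by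
        rw [hsplit]; exact add_le_add hb1 hb2
    _ = ENNReal.ofReal (C * ε ^ α) + ENNReal.ofReal (ε ^ α * M.toReal) := by
        rw [← ENNReal.ofReal_toReal hM.ne, ← ENNReal.ofReal_mul (by positivity),
          ENNReal.ofReal_toReal hM.ne]
    _ = ENNReal.ofReal (C * ε ^ α + ε ^ α * M.toReal) := by
        rw [ENNReal.ofReal_add (by positivity) (by positivity)]
    _ = ENNReal.ofReal ((C + M.toReal) * ε ^ α) := by ring_nf
end
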